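/- Let L be the 3-dimensional Lie algebra with [e₁,e₂] = e₂, [e₂,e₃] = 0, [e₁,e₃] = e₃. Then for every antisymmetric r-matrix r = r¹²e₁∧e₂ + r¹³e₁∧e₃ + r²³e₂∧e₃, the Schouten bracket [r,r]ₛ vanishes identically. -/
import Mathlib


noncomputable section

/-- `e i` is the `i`-th standard basis vector (also used for the dual basis `eⁱ`). -/
def e (i : Fin 3) : Fin 3 → ℂ := fun j => if j = i then 1 else 0

/-- Bilinear bracket determined by structure constants `c`: `[e i, e j] = ∑ k, c i j k • e k`. -/
def bra (c : Fin 3 → Fin 3 → Fin 3 → ℂ) (x y : Fin 3 → ℂ) : Fin 3 → ℂ :=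
  fun k => ∑ i, ∑ j, x i * y j * c i j k

/-- Coordinates of the cobracket `δ(x) = [x⊗1 + 1⊗x, r]` where the r-matrix has
coordinates `ρ`, i.e. `r = ∑ ρ i j • e i ⊗ e j`. -/
def cob (c : Fin 3 → Fin 3 → Fin 3 → ℂ) (ρ : Fin 3 → Fin 3 → ℂ) (x : Fin 3 → ℂ) :
    Fin 3 → Fin 3 → ℂ :=
  fun a b => ∑ i, ∑ j, ρ i j * (bra c x (e i) a * e j b + e i a * bra c x (e j) b)

/-- The induced bracket on the dual space: `⟨[ξ,η]*, e k⟩ = ⟨ξ ⊗ η, δ(e k)⟩`. -/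
def dbra (c : Fin 3 → Fin 3 → Fin 3 → ℂ) (ρ : Fin 3 → Fin 3 → ℂ) (ξ η : Fin 3 → ℂ) :
    Fin 3 → ℂ :=
  fun k => ∑ a, ∑ b, ξ a * η b * cob c ρ (e k) a b

/-- Coordinates of the Schouten bracket
`[r,r]ₛ = [r₁₂,r₁₃] + [r₁₂,r₂₃] + [r₁₃,r₂₃]` in `L⊗L⊗L`. -/
def sch (c : Fin 3 → Fin 3 → Fin 3 → ℂ) (ρ : Fin 3 → Fin 3 → ℂ) :
    Fin 3 → Fin 3 → Fin 3 → ℂ :=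
  fun p q s => ∑ i, ∑ j, ∑ k, ∑ l, ρ i j * ρ k l *
    (c i k p * e j q * e l s + e i p * c j k q * e l s + e i p * e k q * c j l s)

/-- Structure constants of the algebra `[e₁,e₂] = e₂`, `[e₂,e₃] = 0`, `[e₁,e₃] = e₃`. -/
def c3 : Fin 3 → Fin 3 → Fin 3 → ℂ := fun i j k =>
  (if i = 0 ∧ j = 1 ∧ k = 1 then 1 else if i = 0 ∧ j = 2 ∧ k = 2 then 1 else 0)
  - (if j = 0 ∧ i = 1 ∧ k = 1 then 1 else if j = 0 ∧ i = 2 ∧ k = 2 then 1 else 0)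

/-- Coordinates of `r = r¹² e₁∧e₂ + r¹³ e₁∧e₃ + r²³ e₂∧e₃`. -/
def ρ3 (r12 r13 r23 : ℂ) : Fin 3 → Fin 3 → ℂ := fun i j =>
  (if i = 0 ∧ j = 1 then r12 else if i = 0 ∧ j = 2 then r13
    else if i = 1 ∧ j = 2 then r23 else 0)
  - (if j = 0 ∧ i = 1 then r12 else if j = 0 ∧ i = 2 then r13
    else if j = 1 ∧ i = 2 then r23 else 0)

/-- For the algebra `[e₁,e₂] = e₂`, `[e₂,e₃] = 0`, `[e₁,e₃] = e₃`, every antisymmetric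
r-matrix has identically vanishing Schouten bracket `[r,r]ₛ = 0`. -/
theorem schouten_vanishes (r12 r13 r23 : ℂ) :
    ∀ p q s : Fin 3, sch c3 (ρ3 r12 r13 r23) p q s = 0 := by
  intro p q s
  fin_cases p <;> fin_cases q <;> fin_cases s <;>
    simp [sch, c3, ρ3, e, Fin.sum_univ_three] <;> ring
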